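/- There is a constant C depending only on N with the following property. Let ρ be the Bernoulli measure on {0,1} with ρ({1}) = μ(H), and ρ_N := ρ^{⊗N} the corresponding product measure on {0,1}^N (the law of a block of N i.i.d. Bernoulli(μ(H)) variables). Then for every integer n ≥ 1, sup_h |∫ h dρ_N^{⊗(n+1)} − ∫ h dν^{⊗(n+1)}| ≤ C [ n · μ(H ∩ ⋃_{1≤j≤N−1} T^{-j}H) + n μ(H)^2 ]. -/

import Mathlib

open MeasureTheory Filter Set Topology
open scoped ENNReal NNReal

/-- The block vector `𝐗_i = (1_H ∘ T^{Ni}, …, 1_H ∘ T^{N(i+1)-1})`, with values in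
`{0,1}^N`, encoded as `Fin N → Bool` (`true` means the orbit point lies in `H`). -/
noncomputable def blockVec {Ω : Type*} (T : Ω → Ω) (H : Set Ω) (N : ℕ) (i : ℕ) (ω : Ω) :
    Fin N → Bool :=
  fun j => @decide (T^[N * i + j.1] ω ∈ H) (Classical.propDecidable _)

/-!
The i.i.d. block law `ρ_N` and the law `ν` of `𝐗₀` have the same one-dimensional marginals
`μ(H)`; they differ only through coincidences of two ones in a block, which have mass at most
`μ(H)²` under `ρ_N` and, by `T`-invariance, at most `μ(H ∩ ⋃ T⁻ʲH)` under `ν`. A union bound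
at a nonzero block, and total mass one at the zero block, bound the `ℓ¹` distance of `ρ_N` and `ν`
by `O_N(μ(H ∩ ⋃ T⁻ʲH) + μ(H)²)`, and a hybrid argument replacing one factor at a time shows that
the `ℓ¹` distance of `(n+1)`-fold products is at most `n+1` times that of the factors.
-/

section ProductMeasure

variable {E : Type*} [Fintype E]

theorem Fintype.sum_pi_fin_succ {M : Type*} [AddCommMonoid M] {m : ℕ}
    (f : (Fin (m + 1) → E) → M) :
    ∑ v, f v = ∑ x, ∑ w : Fin m → E, f (Fin.cons x w) := by
  rw [← (Fin.consEquiv fun _ => E).sum_comp, Fintype.sum_prod_type]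
  rfl

theorem sum_abs_prod_sub_prod_le {a b : E → ℝ} (ha : ∀ x, 0 ≤ a x) (hb : ∀ x, 0 ≤ b x)
    (ha1 : ∑ x, a x = 1) (hb1 : ∑ x, b x = 1) (m : ℕ) :
    ∑ v : Fin m → E, |∏ i, a (v i) - ∏ i, b (v i)| ≤ m * ∑ x, |a x - b x| := by
  induction m with
  | zero => simp
  | succ m ih =>
    have hstep (x : E) (w : Fin m → E) :
        |a x * ∏ i, a (w i) - b x * ∏ i, b (w i)|
          ≤ a x * |∏ i, a (w i) - ∏ i, b (w i)| + |a x - b x| * ∏ i, b (w i) := by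
      calc _ = |a x * (∏ i, a (w i) - ∏ i, b (w i)) + (a x - b x) * ∏ i, b (w i)| := by
            ring_nf
        _ ≤ |a x * (∏ i, a (w i) - ∏ i, b (w i))| + |(a x - b x) * ∏ i, b (w i)| :=
            abs_add_le _ _
        _ = _ := by
          rw [abs_mul, abs_mul, abs_of_nonneg (ha x),
            abs_of_nonneg (Finset.prod_nonneg fun i _ => hb (w i))]
    calc ∑ v : Fin (m + 1) → E, |∏ i, a (v i) - ∏ i, b (v i)|
        = ∑ x, ∑ w : Fin m → E, |a x * ∏ i, a (w i) - b x * ∏ i, b (w i)| := by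
          simp [Fintype.sum_pi_fin_succ, Fin.prod_univ_succ]
      _ ≤ ∑ x, ∑ w : Fin m → E,
            (a x * |∏ i, a (w i) - ∏ i, b (w i)| + |a x - b x| * ∏ i, b (w i)) := by
          gcongr with x _ w _
          exact hstep x w
      _ = ∑ w : Fin m → E, |∏ i, a (w i) - ∏ i, b (w i)| + ∑ x, |a x - b x| := by
          simp only [Finset.sum_add_distrib, ← Finset.mul_sum, ← Finset.sum_mul,
            ← Fintype.sum_pow, ha1, hb1, one_pow, one_mul, mul_one]
      _ ≤ (m + 1 : ℕ) * ∑ x, |a x - b x| := by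
          push_cast
          linarith

variable [MeasurableSpace E] [MeasurableSingletonClass E]

theorem abs_integral_pi_sub_integral_pi_le (α β : Measure E) [IsProbabilityMeasure α]
    [IsProbabilityMeasure β] {m : ℕ} (h : (Fin m → E) → ℝ) (hh : ∀ v, |h v| ≤ 1) :
    |∫ v, h v ∂(Measure.pi fun _ => α) - ∫ v, h v ∂(Measure.pi fun _ => β)|
      ≤ m * ∑ x, |α.real {x} - β.real {x}| := by
  have hpi (γ : Measure E) [IsProbabilityMeasure γ] (v : Fin m → E) :
      (Measure.pi fun _ => γ).real {v} = ∏ i, γ.real {v i} := by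
    simp [measureReal_def, ENNReal.toReal_prod]
  simp only [integral_fintype Integrable.of_finite, hpi, smul_eq_mul, ← Finset.sum_sub_distrib,
    ← sub_mul]
  calc _ ≤ ∑ v : Fin m → E, |∏ i, α.real {v i} - ∏ i, β.real {v i}| * |h v| := by
        simpa only [abs_mul] using Finset.abs_sum_le_sum_abs (fun v : Fin m → E =>
          (∏ i, α.real {v i} - ∏ i, β.real {v i}) * h v) Finset.univ
    _ ≤ ∑ v : Fin m → E, |∏ i, α.real {v i} - ∏ i, β.real {v i}| := by
        gcongr with v
        exact mul_le_of_le_one_right (abs_nonneg _) (hh v)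
    _ ≤ _ := sum_abs_prod_sub_prod_le (fun _ => measureReal_nonneg) (fun _ => measureReal_nonneg)
        (by simp) (by simp) m

end ProductMeasure

theorem Finset.sum_abs_le_two_mul_sum_erase_abs {E : Type*} [Fintype E] [DecidableEq E]
    {f : E → ℝ} (hf : ∑ x, f x = 0) (z : E) :
    ∑ x, |f x| ≤ 2 * ∑ x ∈ Finset.univ.erase z, |f x| := by
  have hz : |f z| ≤ ∑ x ∈ Finset.univ.erase z, |f x| := by
    rw [← Finset.add_sum_erase _ _ (Finset.mem_univ z), add_eq_zero_iff_eq_neg] at hf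
    rw [hf, abs_neg]
    exact Finset.abs_sum_le_sum_abs _ _
  rw [← Finset.add_sum_erase _ _ (Finset.mem_univ z)]
  linarith

section BoolVectors

variable {N : ℕ} {α : Measure (Fin N → Bool)} [IsFiniteMeasure α] {x : Fin N → Bool}
  {i j : Fin N}

theorem measureReal_singleton_le_coord_pair (hi : x i) (hj : x j) :
    α.real {x} ≤ α.real {y | y i ∧ y j} :=
  measureReal_mono (by simp [hi, hj])

theorem measureReal_singleton_le_coord (hj : x j) : α.real {x} ≤ α.real {y | y j} :=
  measureReal_mono (by simp [hj])

theorem measureReal_coord_sub_sum_le_singleton (hx : ∀ i, x i ↔ i = j) :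
    α.real {y | y j} - ∑ i ∈ Finset.univ.erase j, α.real {y | y i ∧ y j} ≤ α.real {x} := by
  have hcover : {y | y j} ⊆ {x} ∪ ⋃ i ∈ Finset.univ.erase j, {y | y i ∧ y j} := by
    intro y hy
    by_cases hyx : y = x
    · exact Or.inl hyx
    · obtain ⟨i, hi⟩ : ∃ i, y i ≠ x i := Function.ne_iff.1 hyx
      have hij : i ≠ j := by rintro rfl; simp_all
      refine Or.inr (mem_biUnion (Finset.mem_erase.2 ⟨hij, Finset.mem_univ i⟩) ⟨?_, hy⟩)
      have := (hx i).not.2 hij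
      simp_all
  have hle : α.real {y | y j} ≤ α.real {x} + ∑ i ∈ Finset.univ.erase j, α.real {y | y i ∧ y j} :=
    calc
      _ ≤ α.real ({x} ∪ ⋃ i ∈ Finset.univ.erase j, {y | y i ∧ y j}) := measureReal_mono hcover
      _ ≤ α.real {x} + α.real (⋃ i ∈ Finset.univ.erase j, {y | y i ∧ y j}) :=
        measureReal_union_le _ _
      _ ≤ _ := by
        gcongr
        exact measureReal_biUnion_finset_le _ _
  linarith

theorem abs_measureReal_singleton_sub_le {β : Measure (Fin N → Bool)} [IsFiniteMeasure β]
    {p cα cβ : ℝ} (hcα : 0 ≤ cα) (hcβ : 0 ≤ cβ)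
    (hα : ∀ i, α.real {y | y i} = p) (hβ : ∀ i, β.real {y | y i} = p)
    (hαc : ∀ i k, i ≠ k → α.real {y | y i ∧ y k} ≤ cα)
    (hβc : ∀ i k, i ≠ k → β.real {y | y i ∧ y k} ≤ cβ) (hj : x j) :
    |α.real {x} - β.real {x}| ≤ N * (cα + cβ) := by
  have hN : (1 : ℝ) ≤ N := by exact_mod_cast Nat.one_le_of_lt j.2
  by_cases htwo : ∃ i, i ≠ j ∧ x i
  · obtain ⟨i, hij, hi⟩ := htwo
    have hα' := (measureReal_singleton_le_coord_pair hi hj).trans (hαc i j hij)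
    have hβ' := (measureReal_singleton_le_coord_pair (α := β) hi hj).trans (hβc i j hij)
    rw [abs_le]
    constructor <;> nlinarith [measureReal_nonneg (μ := α) (s := {x}),
      measureReal_nonneg (μ := β) (s := {x})]
  · push Not at htwo
    have hx : ∀ i, x i ↔ i = j := fun i =>
      ⟨fun hi => by_contra fun hij => htwo i hij hi, fun h => h ▸ hj⟩
    have hsum (γ : Measure (Fin N → Bool)) (c : ℝ)
        (hc : ∀ i k, i ≠ k → γ.real {y | y i ∧ y k} ≤ c) :
        ∑ i ∈ Finset.univ.erase j, γ.real {y | y i ∧ y j} ≤ (N - 1) * c := by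
      refine (Finset.sum_le_sum fun i hi => hc i j (Finset.ne_of_mem_erase hi)).trans_eq ?_
      simp [Finset.card_erase_of_mem, Nat.cast_sub (Nat.one_le_of_lt j.2)]
    have hα₁ := measureReal_coord_sub_sum_le_singleton (α := α) hx
    have hα₂ := measureReal_singleton_le_coord (α := α) hj
    have hβ₁ := measureReal_coord_sub_sum_le_singleton (α := β) hx
    have hβ₂ := measureReal_singleton_le_coord (α := β) hj
    rw [hα] at hα₁ hα₂
    rw [hβ] at hβ₁ hβ₂
    have hαs := hsum α cα hαc
    have hβs := hsum β cβ hβc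
    rw [abs_le]
    constructor <;> nlinarith

theorem sum_abs_measureReal_singleton_sub_le {β : Measure (Fin N → Bool)}
    [IsProbabilityMeasure α] [IsProbabilityMeasure β]
    {p cα cβ : ℝ} (hcα : 0 ≤ cα) (hcβ : 0 ≤ cβ)
    (hα : ∀ i, α.real {y | y i} = p) (hβ : ∀ i, β.real {y | y i} = p)
    (hαc : ∀ i k, i ≠ k → α.real {y | y i ∧ y k} ≤ cα)
    (hβc : ∀ i k, i ≠ k → β.real {y | y i ∧ y k} ≤ cβ) :
    ∑ x, |α.real {x} - β.real {x}| ≤ 2 * 2 ^ N * N * (cα + cβ) := by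
  have hsum : ∑ x, (α.real {x} - β.real {x}) = 0 := by simp
  refine (Finset.sum_abs_le_two_mul_sum_erase_abs hsum fun _ => false).trans ?_
  have hbound : ∀ x ∈ Finset.univ.erase (fun _ => false),
      |α.real {x} - β.real {x}| ≤ N * (cα + cβ) := by
    intro x hx
    obtain ⟨j, hj⟩ := Function.ne_iff.1 (Finset.ne_of_mem_erase hx)
    exact abs_measureReal_singleton_sub_le hcα hcβ hα hβ hαc hβc (by simpa using hj)
  have hcard : ((Finset.univ.erase fun _ : Fin N => false).card : ℝ) ≤ 2 ^ N := by
    exact_mod_cast (Finset.card_erase_le).trans_eq (by simp)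
  have := (Finset.sum_le_card_nsmul _ _ _ hbound)
  rw [nsmul_eq_mul] at this
  have : 0 ≤ (N : ℝ) * (cα + cβ) := by positivity
  nlinarith

end BoolVectors

noncomputable def bernoulliBool (q : ℝ≥0∞) : Measure Bool :=
  q • Measure.dirac true + (1 - q) • Measure.dirac false

section Bernoulli

variable {q : ℝ≥0∞}

theorem isProbabilityMeasure_bernoulliBool (hq : q ≤ 1) :
    IsProbabilityMeasure (bernoulliBool q) :=
  ⟨by simp [bernoulliBool, add_tsub_cancel_of_le hq]⟩

variable {N : ℕ}

theorem measure_pi_bernoulliBool_coord (hq : q ≤ 1) (i : Fin N) :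
    Measure.pi (fun _ => bernoulliBool q) {y | y i} = q := by
  have := isProbabilityMeasure_bernoulliBool hq
  rw [show {y : Fin N → Bool | y i} = Function.eval i ⁻¹' ({true} : Set Bool) from rfl,
    (measurePreserving_eval _ i).measure_preimage (measurableSet_singleton _).nullMeasurableSet]
  simp [bernoulliBool]

theorem measure_pi_bernoulliBool_coord_pair (hq : q ≤ 1) {i k : Fin N} (hik : i ≠ k) :
    Measure.pi (fun _ => bernoulliBool q) {y | y i ∧ y k} = q ^ 2 := by
  have := isProbabilityMeasure_bernoulliBool hq
  have hind := (ProbabilityTheory.iIndepFun_pi (μ := fun _ : Fin N => bernoulliBool q)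
    (X := fun _ => id) fun _ => aemeasurable_id).indepFun hik
  rw [show {y : Fin N → Bool | y i ∧ y k} = (fun y => id (y i)) ⁻¹' {true} ∩
      (fun y => id (y k)) ⁻¹' {true} from rfl,
    hind.measure_inter_preimage_eq_mul _ _ (measurableSet_singleton _) (measurableSet_singleton _),
    sq]
  exact congr_arg₂ (· * ·) (measure_pi_bernoulliBool_coord hq i)
    (measure_pi_bernoulliBool_coord hq k)

end Bernoulli

section BlockVec

variable {Ω : Type*} [MeasurableSpace Ω] {μ : Measure Ω} {T : Ω → Ω} {H : Set Ω} {N : ℕ}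

theorem measurable_blockVec (hT : Measurable T) (hH : MeasurableSet H) (i : ℕ) :
    Measurable (blockVec T H N i) :=
  measurable_pi_lambda _ fun j => measurable_to_bool <| by
    simpa [blockVec, Set.preimage] using (hT.iterate _) hH

theorem measure_preimage_iterate_inter_le (hT : MeasurePreserving T μ μ) (hH : MeasurableSet H)
    {i k : ℕ} (hik : i < k) (hkN : k < N) :
    μ (T^[i] ⁻¹' H ∩ T^[k] ⁻¹' H) ≤ μ (H ∩ ⋃ j ∈ Icc 1 (N - 1), T^[j] ⁻¹' H) := by
  obtain ⟨d, rfl⟩ : ∃ d, k = d + i := ⟨k - i, by omega⟩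
  rw [Function.iterate_add, preimage_comp, ← preimage_inter,
    (hT.iterate i).measure_preimage (hH.inter ((hT.measurable.iterate d) hH)).nullMeasurableSet]
  exact measure_mono <| inter_subset_inter_right _ <|
    subset_biUnion_of_mem (u := fun j => T^[j] ⁻¹' H) (by simp only [mem_Icc]; omega)

theorem measureReal_map_blockVec_coord (hT : MeasurePreserving T μ μ) (hH : MeasurableSet H)
    (j : Fin N) : (μ.map (blockVec T H N 0)).real {y | y j} = μ.real H := by
  rw [map_measureReal_apply (measurable_blockVec hT.measurable hH 0) (Set.toFinite _).measurableSet]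
  convert (hT.iterate j).measureReal_preimage hH.nullMeasurableSet using 2
  ext ω
  simp [blockVec]

theorem measureReal_map_blockVec_coord_pair_le [IsFiniteMeasure μ] (hT : MeasurePreserving T μ μ)
    (hH : MeasurableSet H) {i k : Fin N} (hik : i ≠ k) :
    (μ.map (blockVec T H N 0)).real {y | y i ∧ y k}
      ≤ μ.real (H ∩ ⋃ j ∈ Icc 1 (N - 1), T^[j] ⁻¹' H) := by
  rw [map_measureReal_apply (measurable_blockVec hT.measurable hH 0) (Set.toFinite _).measurableSet]
  have hpre : blockVec T H N 0 ⁻¹' {y | y i ∧ y k} = T^[i] ⁻¹' H ∩ T^[k] ⁻¹' H := by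
    ext ω
    simp [blockVec]
  rw [hpre]
  refine ENNReal.toReal_mono (measure_ne_top _ _) ?_
  rcases lt_or_gt_of_ne (Fin.val_ne_of_ne hik) with h | h
  · exact measure_preimage_iterate_inter_le hT hH h k.2
  · rw [inter_comm]
    exact measure_preimage_iterate_inter_le hT hH h i.2

end BlockVec

/-- There is a constant `C` depending only on `N` such that, with `ρ`
the Bernoulli measure on `{0,1}` with `ρ({1}) = μ(H)` and `ρ_N := ρ^{⊗N}`, for every
`n ≥ 1` and every `[0,1]`-valued `h`,
`|∫ h dρ_N^{⊗(n+1)} − ∫ h dν^{⊗(n+1)}|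
  ≤ C [ n·μ(H ∩ ⋃_{1≤j≤N−1} T⁻ʲH) + n·μ(H)² ]`,
where `ν` is the law of the block vector `𝐗_0`. -/
theorem stmt6 (N : ℕ) (hN : 1 ≤ N) :
    ∃ C : ℝ, 0 < C ∧
    ∀ (Ω : Type*) [MeasurableSpace Ω] (μ : Measure Ω) [IsProbabilityMeasure μ]
      (T : Ω → Ω), MeasurePreserving T μ μ →
    ∀ (H : Set Ω), MeasurableSet H → 0 < μ H →
    ∀ n : ℕ, 1 ≤ n →
    ∀ h : (Fin (n + 1) → (Fin N → Bool)) → ℝ, (∀ v, h v ∈ Icc (0 : ℝ) 1) →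
    |(∫ v, h v ∂(Measure.pi fun _ : Fin (n + 1) =>
        Measure.pi fun _ : Fin N =>
          (μ H • Measure.dirac true + (1 - μ H) • Measure.dirac false : Measure Bool)))
      - ∫ v, h v ∂(Measure.pi fun _ : Fin (n + 1) => Measure.map (blockVec T H N 0) μ)|
    ≤ C * ((n : ℝ) * (μ (H ∩ ⋃ j ∈ Icc 1 (N - 1), T^[j] ⁻¹' H)).toReal
        + (n : ℝ) * (μ H).toReal ^ 2) := by
  refine ⟨4 * N * 2 ^ N, by positivity, ?_⟩
  intro Ω _ μ _ T hT H hH _ n hn h hh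
  have hH1 : μ H ≤ 1 := prob_le_one
  have := isProbabilityMeasure_bernoulliBool hH1
  have : IsProbabilityMeasure (μ.map (blockVec T H N 0)) :=
    Measure.isProbabilityMeasure_map (measurable_blockVec hT.measurable hH 0).aemeasurable
  have hL1 := sum_abs_measureReal_singleton_sub_le (α := Measure.pi fun _ => bernoulliBool (μ H))
    (β := μ.map (blockVec T H N 0)) (sq_nonneg _) measureReal_nonneg
    (fun i => by rw [measureReal_def, measure_pi_bernoulliBool_coord hH1, measureReal_def])
    (measureReal_map_blockVec_coord hT hH)
    (fun i k hik => by
      rw [measureReal_def, measure_pi_bernoulliBool_coord_pair hH1 hik, ENNReal.toReal_pow])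
    (fun i k hik => measureReal_map_blockVec_coord_pair_le hT hH hik)
  have hn' : ((n + 1 : ℕ) : ℝ) ≤ 2 * n := by norm_cast; omega
  calc _ ≤ ((n + 1 : ℕ) : ℝ) * _ := abs_integral_pi_sub_integral_pi_le
        (Measure.pi fun _ => bernoulliBool (μ H)) (μ.map (blockVec T H N 0)) h fun v =>
        abs_le.2 ⟨by linarith [(hh v).1], (hh v).2⟩
    _ ≤ (2 * n) * (2 * 2 ^ N * N *
          ((μ H).toReal ^ 2 + μ.real (H ∩ ⋃ j ∈ Icc 1 (N - 1), T^[j] ⁻¹' H))) := by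
        gcongr
    _ = _ := by simp only [measureReal_def]; ring
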